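/- Let ℓ ∈ ℕ and let L = (L_0, …, L_{m−1}) be an ℓ-prefix-sorted list of pairwise-distinct lists over a linearly ordered type α. Let S = { i : (i > 0 and L_{i−1}.take ℓ = L_i.take ℓ) or (i < m−1 and L_i.take ℓ = L_{i+1}.take ℓ) }. Let L' = (L'_0, …, L'_{m−1}) be a list of the same length such that L'_i = L_i for all i ∉ S, and such that the subsequence of L' at the positions of S, taken in increasing order of position, is a strictly lexicographically sorted permutation of the subsequence of L at the positions of S. Then for every 1 ≤ i ≤ m−1 with L_{i−1}.take ℓ ≠ L_i.take ℓ, one has lcp(L'_{i−1}, L'_i) = lcp(L_{i−1}, L_i). -/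

import Mathlib

/-!
Outside `S` nothing moves. On `S` the new entries are a rearrangement of the old ones whose
length-`ℓ` prefixes are sorted both before and after, and two sorted arrangements of the same
list coincide; hence every entry keeps its length-`ℓ` prefix. If two length-`ℓ` prefixes differ,
the LCP is shorter than `ℓ` and is therefore determined by those prefixes alone.
-/

/-- The length of the longest common prefix of two lists: the largest
`k ≤ min |a| |b|` such that `a.take k = b.take k`. -/
def lcp {α : Type*} [DecidableEq α] : List α → List α → ℕ
  | x :: xs, y :: ys => if x = y then lcp xs ys + 1 else 0
  | _, _ => 0

/-- Lexicographic (non-strict) order on lists. -/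
def lexLe {α : Type*} [LinearOrder α] (a b : List α) : Prop :=
  List.Lex (· < ·) a b ∨ a = b

/-- A finite sequence of lists is `ℓ`-prefix-sorted if its entries are sorted
lexicographically up to their length-`ℓ` prefixes. -/
def PrefixSorted {α : Type*} [LinearOrder α] (ℓ m : ℕ) (L : Fin m → List α) : Prop :=
  ∀ i j : Fin m, i ≤ j → lexLe ((L i).take ℓ) ((L j).take ℓ)

/-- `i` belongs to the set `S` of positions that share their length-`ℓ` prefix
with the previous or the next position. -/
def InS {α : Type*} [LinearOrder α] (ℓ m : ℕ) (L : Fin m → List α) (i : Fin m) : Prop :=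
  (∃ j : Fin m, j.1 + 1 = i.1 ∧ (L j).take ℓ = (L i).take ℓ) ∨
  (∃ j : Fin m, i.1 + 1 = j.1 ∧ (L i).take ℓ = (L j).take ℓ)

theorem List.take_le_take_of_lt {α : Type*} [LinearOrder α] {a b : List α} (h : a < b)
    (n : ℕ) : a.take n ≤ b.take n := by
  induction h generalizing n with
  | nil =>
    cases n with
    | zero => exact le_rfl
    | succ n => exact le_of_lt List.Lex.nil
  | @cons x l₁ l₂ _ ih =>
    cases n with
    | zero => exact le_rfl
    | succ n =>
      rcases (ih n).lt_or_eq with hlt | heq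
      · exact le_of_lt (List.Lex.cons hlt)
      · simp only [List.take_succ_cons, heq, le_rfl]
  | rel hxy =>
    cases n with
    | zero => exact le_rfl
    | succ n => exact le_of_lt (List.Lex.rel hxy)

section lcp

variable {α : Type*} [DecidableEq α]

theorem take_lcp_eq_take_lcp : ∀ a b : List α, a.take (lcp a b) = b.take (lcp a b)
  | x :: xs, y :: ys => by
    by_cases hxy : x = y
    · simp [lcp, hxy, take_lcp_eq_take_lcp xs ys]
    · simp [lcp, hxy]
  | [], _ | _ :: _, [] => by simp [lcp]

theorem lcp_take_take : ∀ (n : ℕ) (a b : List α),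
    lcp (a.take n) (b.take n) = min n (lcp a b)
  | n + 1, x :: xs, y :: ys => by
    by_cases hxy : x = y
    · simp [lcp, hxy, lcp_take_take n xs ys]
    · simp [lcp, hxy]
  | 0, _, _ | _ + 1, [], _ | _ + 1, _ :: _, [] => by simp [lcp]

theorem lcp_take_take_of_take_ne {n : ℕ} {a b : List α} (h : a.take n ≠ b.take n) :
    lcp (a.take n) (b.take n) = lcp a b := by
  have hlt : lcp a b < n := by
    by_contra! hle
    apply h
    have htake : ∀ c : List α, c.take n = (c.take (lcp a b)).take n := fun c => by
      rw [List.take_take, min_eq_left hle]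
    rw [htake a, htake b, take_lcp_eq_take_lcp]
  rw [lcp_take_take, min_eq_right hlt.le]

theorem lcp_eq_of_take_eq_of_take_ne {n : ℕ} {a b a' b' : List α}
    (ha : a'.take n = a.take n) (hb : b'.take n = b.take n) (hne : a.take n ≠ b.take n) :
    lcp a' b' = lcp a b := by
  rw [← lcp_take_take_of_take_ne hne, ← ha, ← hb, lcp_take_take_of_take_ne (ha ▸ hb ▸ hne)]

end lcp

theorem MonotoneOn.apply_perm_eq {ι β : Type*} [LinearOrder ι] [PartialOrder β] {s : Finset ι}
    {σ : Equiv.Perm ι} (hσ : ∀ i ∉ s, σ i = i) {f : ι → β} (hf : MonotoneOn f s)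
    (hfσ : MonotoneOn (f ∘ σ) s) {i : ι} (hi : i ∈ s) : f (σ i) = f i := by
  set l := s.sort (· ≤ ·)
  have hmem : ∀ k, k ∈ l ↔ k ∈ s := fun k => Finset.mem_sort _
  have hσs : s.map σ.toEmbedding = s :=
    Finset.map_perm fun k hk => by_contra fun hks => hk (hσ k hks)
  have hperm : (l.map σ).Perm l := by
    refine (List.perm_ext_iff_of_nodup ((s.sort_nodup _).map σ.injective) (s.sort_nodup _)).2
      fun k => ?_
    simp only [List.mem_map, Finset.mem_sort]
    exact Finset.mem_map.symm.trans (by rw [hσs])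
  have hsorted : ∀ g : ι → β, MonotoneOn g s → (l.map g).Pairwise (· ≤ ·) := fun g hg => by
    rw [List.pairwise_map]
    exact (s.pairwise_sort (· ≤ ·)).imp_of_mem fun ha hb hab =>
      hg ((hmem _).1 ha) ((hmem _).1 hb) hab
  have heq : l.map (f ∘ σ) = l.map f := by
    refine List.Perm.eq_of_pairwise' (hsorted _ hfσ) (hsorted _ hf) ?_
    rw [← List.map_map]
    exact hperm.map f
  exact List.map_inj_left.1 heq i ((hmem i).2 hi)

theorem lexLe_iff_le {α : Type*} [LinearOrder α] {a b : List α} : lexLe a b ↔ a ≤ b := by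
  rw [le_iff_lt_or_eq]
  rfl

theorem PrefixSorted.monotone_take {α : Type*} [LinearOrder α] {ℓ m : ℕ} {L : Fin m → List α}
    (h : PrefixSorted ℓ m L) : Monotone fun i => (L i).take ℓ := fun i j hij =>
  lexLe_iff_le.1 (h i j hij)

theorem stmt_15_general {α : Type*} [LinearOrder α] (ℓ m : ℕ) (L L' : Fin m → List α)
    (hsorted : PrefixSorted ℓ m L)
    (hperm : ∃ σ : Equiv.Perm (Fin m),
      (∀ i : Fin m, ¬ InS ℓ m L i → σ i = i) ∧ ∀ i : Fin m, L' i = L (σ i))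
    (hsortS : ∀ i j : Fin m, InS ℓ m L i → InS ℓ m L j → i < j →
      List.Lex (· < ·) (L' i) (L' j)) :
    ∀ i j : Fin m, i.1 + 1 = j.1 → (L i).take ℓ ≠ (L j).take ℓ →
      lcp (L' i) (L' j) = lcp (L i) (L j) := by
  classical
  obtain ⟨σ, hσ, hL'⟩ := hperm
  let S : Finset (Fin m) := {k | InS ℓ m L k}
  have hS : ∀ k, k ∈ S ↔ InS ℓ m L k := by simp [S]
  have hprefix : ∀ k, (L' k).take ℓ = (L k).take ℓ := by
    intro k
    rw [hL']
    by_cases hk : InS ℓ m L k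
    · refine hsorted.monotone_take.monotoneOn _ |>.apply_perm_eq
        (fun k hk => hσ k (mt (hS k).2 hk)) ?_ ((hS k).2 hk)
      intro a ha b hb hab
      rcases hab.lt_or_eq with hab | rfl
      · simpa only [Function.comp_apply, hL'] using
          List.take_le_take_of_lt (hsortS a b ((hS a).1 ha) ((hS b).1 hb) hab) ℓ
      · exact le_rfl
    · rw [hσ k hk]
  intro i j _ hne
  exact lcp_eq_of_take_eq_of_take_ne (hprefix i) (hprefix j) hne

theorem stmt_15 {α : Type*} [LinearOrder α] (ℓ m : ℕ) (L L' : Fin m → List α)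
    (hsorted : PrefixSorted ℓ m L)
    (hdist : ∀ i j : Fin m, i ≠ j → L i ≠ L j)
    (hperm : ∃ σ : Equiv.Perm (Fin m),
      (∀ i : Fin m, ¬ InS ℓ m L i → σ i = i) ∧ ∀ i : Fin m, L' i = L (σ i))
    (hfix : ∀ i : Fin m, ¬ InS ℓ m L i → L' i = L i)
    (hsortS : ∀ i j : Fin m, InS ℓ m L i → InS ℓ m L j → i < j →
      List.Lex (· < ·) (L' i) (L' j)) :
    ∀ i j : Fin m, i.1 + 1 = j.1 → (L i).take ℓ ≠ (L j).take ℓ →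
      lcp (L' i) (L' j) = lcp (L i) (L j) :=
  stmt_15_general ℓ m L L' hsorted hperm hsortS
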